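/- arXiv:1401.5542 — 2 statements merged into one kernel-verified Lean document; each statement's English description precedes it below -/
import Mathlib

section
/- Let I_k be the k×k identity matrix, R_k the k×k matrix whose first row consists entirely of 1's and all other entries 0, and S_k the k×k matrix with 1's on the subdiagonal and 0 elsewhere. Then det(I_k + R_k − S_k) = k + 1. -/
open Matrix

/-- R_k : first row all ones. -/
def Rmat (k : ℕ) : Matrix (Fin k) (Fin k) ℤ :=
  Matrix.of fun i _ => if (i : ℕ) = 0 then 1 else 0

/-- S_k : ones on the subdiagonal. -/
def Smat (k : ℕ) : Matrix (Fin k) (Fin k) ℤ :=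
  Matrix.of fun i j => if (i : ℕ) = (j : ℕ) + 1 then 1 else 0

/-!
With `J = vecMulVec 1 1` the all-ones matrix, `(1 - S) * J` replaces each row of `J` by its
difference with the row above, so only the first row survives and `(1 - S) * J = R`.
Hence `1 + R - S = (1 - S) * (1 + J)`, where `1 - S` is unitriangular and
`det (1 + J) = 1 + k` by the matrix determinant lemma.
-/

theorem Matrix.det_one_add_vecMulVec {n α : Type*} [Fintype n] [DecidableEq n] [CommRing α]
    (u v : n → α) : det (1 + vecMulVec u v) = 1 + v ⬝ᵥ u := by
  rw [vecMulVec_eq Unit, det_one_add_replicateCol_mul_replicateRow]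

theorem Rmat_eq_vecMulVec (k : ℕ) :
    Rmat k = vecMulVec (fun i : Fin k => if (i : ℕ) = 0 then 1 else 0) 1 := by
  ext i j
  simp [Rmat, vecMulVec_apply]

theorem Smat_mulVec_one (k : ℕ) :
    Smat k *ᵥ 1 = fun i : Fin k => if (i : ℕ) = 0 then 0 else 1 := by
  ext i
  simp only [mulVec, dotProduct, Smat, of_apply, Pi.one_apply, mul_one]
  split_ifs with hi
  · exact Finset.sum_eq_zero fun l _ => if_neg (by omega)
  · have hpred : (i : ℕ) = (i - 1 : ℕ) + 1 := (Nat.succ_pred_eq_of_ne_zero hi).symm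
    rw [Fintype.sum_eq_single ⟨i - 1, by omega⟩ fun l hl => if_neg fun h => hl
      (Fin.ext (show (l : ℕ) = i - 1 by omega))]
    exact if_pos hpred

theorem one_sub_Smat_mulVec_one (k : ℕ) :
    (1 - Smat k) *ᵥ 1 = fun i : Fin k => if (i : ℕ) = 0 then 1 else 0 := by
  rw [sub_mulVec, one_mulVec, Smat_mulVec_one]
  ext i
  by_cases hi : (i : ℕ) = 0 <;> simp [hi]

theorem det_one_sub_Smat (k : ℕ) : det (1 - Smat k) = 1 := by
  rw [det_of_isLowerTriangular]
  · simp [Smat]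
  · intro i j hij
    have hij : (i : ℕ) < j := hij
    simp [Smat, one_apply_ne (Fin.ne_of_lt hij), if_neg (by omega : ¬(i : ℕ) = j + 1)]

theorem det_one_add_R_sub_S (k : ℕ) :
    Matrix.det (1 + Rmat k - Smat k) = (k : ℤ) + 1 := by
  have hfactor : 1 + Rmat k - Smat k = (1 - Smat k) * (1 + vecMulVec 1 1) := by
    rw [mul_add, mul_one, mul_vecMulVec, one_sub_Smat_mulVec_one, ← Rmat_eq_vecMulVec]
    abel
  rw [hfactor, det_mul, det_one_sub_Smat, one_mul, det_one_add_vecMulVec]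
  simp [add_comm]
end

section
/- Let T : ℤⁿ → ℤᵐ be a ℤ-linear map given by an integer matrix. If some set of columns of the matrix spans a subgroup mapped isomorphically onto the image of T, and the cokernel of T is finite of order d, then the determinant of the corresponding square submatrix (formed by those m columns, assuming T has full rank m over ℚ) equals ±d. -/
open Matrix

theorem LinearMap.natAbs_det_eq_card_quotient_range {M : Type*} [AddCommGroup M]
    [Module.Free ℤ M] [Module.Finite ℤ M] {f : M →ₗ[ℤ] M} (hf : Function.Injective f) :
    (LinearMap.det f).natAbs = Nat.card (M ⧸ LinearMap.range f) :=
  Submodule.natAbs_det_equiv (LinearMap.range f) (LinearEquiv.ofInjective f hf)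

theorem Matrix.natAbs_det_eq_card_quotient_range {ι : Type*} [Fintype ι] [DecidableEq ι]
    {B : Matrix ι ι ℤ} (hB : Function.Injective (Matrix.toLin' B)) :
    B.det.natAbs = Nat.card ((ι → ℤ) ⧸ LinearMap.range (Matrix.toLin' B)) := by
  rw [← LinearMap.det_toLin', LinearMap.natAbs_det_eq_card_quotient_range hB]

theorem det_basic_submatrix_eq_card_coker_general (m n : ℕ) (A : Matrix (Fin m) (Fin n) ℤ)
    (g : Fin m → Fin n)
    (hrange : LinearMap.range (Matrix.toLin' (A.submatrix id g)) =
      LinearMap.range (Matrix.toLin' A))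
    (hinj : Function.Injective (Matrix.toLin' (A.submatrix id g)))
    (d : ℕ)
    (hd : Nat.card ((Fin m → ℤ) ⧸ LinearMap.range (Matrix.toLin' A)) = d) :
    (A.submatrix id g).det = d ∨ (A.submatrix id g).det = -d := by
  have hdet : (A.submatrix id g).det.natAbs = d := by
    rw [Matrix.natAbs_det_eq_card_quotient_range hinj, hrange, hd]
  exact hdet ▸ Int.natAbs_eq _

theorem det_basic_submatrix_eq_card_coker (m n : ℕ) (A : Matrix (Fin m) (Fin n) ℤ)
    (g : Fin m → Fin n)
    (hrange : LinearMap.range (Matrix.toLin' (A.submatrix id g)) =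
      LinearMap.range (Matrix.toLin' A))
    (hinj : Function.Injective (Matrix.toLin' (A.submatrix id g)))
    (d : ℕ) (hd0 : 0 < d)
    (hd : Nat.card ((Fin m → ℤ) ⧸ LinearMap.range (Matrix.toLin' A)) = d) :
    (A.submatrix id g).det = d ∨ (A.submatrix id g).det = -d :=
  det_basic_submatrix_eq_card_coker_general m n A g hrange hinj d hd
end
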